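/- arXiv:quant-ph/0212082 — 3 statements merged into one kernel-verified Lean document; each statement's English description precedes it below -/
import Mathlib

section
/- For a unit vector n ∈ ℝ³ and α ∈ ℝ, exp(−(i α/2) σ·n) = cos(α/2) I₂ − i sin(α/2) σ·n, and this matrix lies in SU(2). -/
open Matrix Complex

/-- The Pauli "vector" `σ·n`. -/
noncomputable def pauli (v : Fin 3 → ℝ) : Matrix (Fin 2) (Fin 2) ℂ :=
  (v 0 : ℂ) • !![0, 1; 1, 0] + (v 1 : ℂ) • !![0, -I; I, 0] + (v 2 : ℂ) • !![1, 0; 0, -1]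

lemma pauli_eq (v : Fin 3 → ℝ) :
    pauli v = !![(v 2 : ℂ), (v 0 : ℂ) - (v 1 : ℂ) * I;
                 (v 0 : ℂ) + (v 1 : ℂ) * I, -(v 2 : ℂ)] := by
  unfold pauli
  ext i j
  fin_cases i <;> fin_cases j <;> simp <;> ring

lemma pauli_sq (n : Fin 3 → ℝ) (hn : ∑ i, n i ^ 2 = 1) :
    pauli n * pauli n = 1 := by
  have hn' : (n 0 : ℂ) ^ 2 + (n 1 : ℂ) ^ 2 + (n 2 : ℂ) ^ 2 = 1 := by
    have := hn
    rw [Fin.sum_univ_three] at this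
    exact_mod_cast congrArg (Complex.ofReal) this
  rw [pauli_eq]
  ext i j
  fin_cases i <;> fin_cases j <;>
    simp [Matrix.mul_apply, Fin.sum_univ_two, Matrix.one_apply] <;>
    first
      | ring1
      | linear_combination hn' - (n 1 : ℂ) ^ 2 * Complex.I_sq

lemma pauli_star (v : Fin 3 → ℝ) : star (pauli v) = pauli v := by
  rw [pauli_eq]
  ext i j
  fin_cases i <;> fin_cases j <;>
    simp [Matrix.conjTranspose_apply, Complex.ext_iff]

lemma exp_smul_pauli (n : Fin 3 → ℝ) (hn : ∑ i, n i ^ 2 = 1) (x : ℝ) :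
    NormedSpace.exp ((-(I * (x : ℂ))) • pauli n) =
      ((Real.cos x : ℂ)) • (1 : Matrix (Fin 2) (Fin 2) ℂ)
        - (I * (Real.sin x : ℂ)) • pauli n := by
  have hP2 : pauli n * pauli n = 1 := pauli_sq n hn
  have hPsq : pauli n ^ 2 = 1 := by rw [sq, hP2]
  set P := pauli n with hP
  set c : ℂ := -(I * (x : ℂ)) with hc
  have hc2 : c ^ 2 = -((x : ℂ) ^ 2) := by
    rw [hc]; ring_nf; rw [Complex.I_sq]; ring
  have he : ∀ k : ℕ, c ^ (2 * k) = (-1 : ℂ) ^ k * (x : ℂ) ^ (2 * k) := by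
    intro k
    rw [pow_mul, hc2, neg_pow, ← pow_mul]
  have ho : ∀ k : ℕ, c ^ (2 * k + 1) = -I * ((-1 : ℂ) ^ k * (x : ℂ) ^ (2 * k + 1)) := by
    intro k
    rw [pow_succ, he k, hc]; ring
  have hpow_even : ∀ k : ℕ, (c • P) ^ (2 * k) = ((-1 : ℂ) ^ k * (x : ℂ) ^ (2 * k)) • 1 := by
    intro k
    rw [smul_pow, he k, pow_mul P, hPsq, one_pow]
  have hpow_odd : ∀ k : ℕ, (c • P) ^ (2 * k + 1) =
      (-I * ((-1 : ℂ) ^ k * (x : ℂ) ^ (2 * k + 1))) • P := by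
    intro k
    rw [smul_pow, ho k, pow_succ P, pow_mul P, hPsq, one_pow, one_mul]
  have hcos := (Complex.hasSum_cos (x : ℂ)).smul_const (1 : Matrix (Fin 2) (Fin 2) ℂ)
  have hsin := ((Complex.hasSum_sin (x : ℂ)).mul_left (-I)).smul_const P
  have hsum : HasSum (fun k : ℕ => ((k.factorial : ℂ))⁻¹ • (c • P) ^ k)
      (Complex.cos (x : ℂ) • (1 : Matrix (Fin 2) (Fin 2) ℂ) +
        (-I * Complex.sin (x : ℂ)) • P) := by
    refine HasSum.even_add_odd ?_ ?_
    · convert hcos using 2 with k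
      rw [hpow_even k, smul_smul]
      congr 1
      rw [div_eq_mul_inv]; ring
    · convert hsin using 2 with k
      rw [hpow_odd k, smul_smul]
      congr 1
      rw [div_eq_mul_inv]; ring
  rw [NormedSpace.exp_eq_tsum (𝕂 := ℂ)]
  show (∑' (k : ℕ), ((k.factorial : ℂ))⁻¹ • (c • P) ^ k) = _
  rw [hsum.tsum_eq, Complex.ofReal_cos, Complex.ofReal_sin, sub_eq_add_neg, ← neg_smul, neg_mul]

lemma su_aux (n : Fin 3 → ℝ) (hn : ∑ i, n i ^ 2 = 1) (a s : ℝ)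
    (has : (a : ℂ) ^ 2 + (s : ℂ) ^ 2 = 1) :
    ((a : ℂ) • (1 : Matrix (Fin 2) (Fin 2) ℂ) - (I * (s : ℂ)) • pauli n) ∈
      Matrix.specialUnitaryGroup (Fin 2) ℂ := by
  have hP2 : pauli n * pauli n = 1 := pauli_sq n hn
  have hn' : (n 0 : ℂ) ^ 2 + (n 1 : ℂ) ^ 2 + (n 2 : ℂ) ^ 2 = 1 := by
    have := hn
    rw [Fin.sum_univ_three] at this
    exact_mod_cast congrArg (Complex.ofReal) this
  refine Matrix.mem_specialUnitaryGroup_iff.mpr ⟨Matrix.mem_unitaryGroup_iff.mpr ?_, ?_⟩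
  · have hstar : star ((a : ℂ) • (1 : Matrix (Fin 2) (Fin 2) ℂ) - (I * (s : ℂ)) • pauli n)
        = (a : ℂ) • (1 : Matrix (Fin 2) (Fin 2) ℂ) + (I * (s : ℂ)) • pauli n := by
      rw [star_sub, star_smul, star_smul, pauli_star, star_one]
      simp [Complex.conj_ofReal, Complex.ext_iff]
    rw [hstar]
    have comm : Commute ((a : ℂ) • (1 : Matrix (Fin 2) (Fin 2) ℂ)) ((I * (s : ℂ)) • pauli n) :=
      ((Commute.one_left (pauli n)).smul_left _).smul_right _
    rw [← comm.mul_self_sub_mul_self_eq', smul_mul_smul, smul_mul_smul, one_mul, hP2,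
      ← sub_smul]
    have : (a : ℂ) * a - I * (s : ℂ) * (I * (s : ℂ)) = 1 := by
      linear_combination has - (s : ℂ) ^ 2 * Complex.I_sq
    rw [this, one_smul]
  · rw [pauli_eq, Matrix.det_fin_two]
    simp [Matrix.one_apply]
    linear_combination has + (s : ℂ) ^ 2 * hn' +
      (-(s:ℂ)^2*((n 2:ℂ)^2+(n 0:ℂ)^2) - 2*(s:ℂ)^2*(n 1:ℂ)^2 + (I^2+1)*(s:ℂ)^2*(n 1:ℂ)^2) * Complex.I_sq

/-- For a unit vector `n ∈ ℝ³` and `α ∈ ℝ`,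
`exp(−(iα/2) σ·n) = cos(α/2) I₂ − i sin(α/2) σ·n`, and this matrix lies in `SU(2)`. -/
theorem exp_pauli (n : Fin 3 → ℝ) (hn : ∑ i, n i ^ 2 = 1) (α : ℝ) :
    NormedSpace.exp ((-(I * (α / 2 : ℝ))) • pauli n) =
      ((Real.cos (α / 2) : ℂ)) • (1 : Matrix (Fin 2) (Fin 2) ℂ)
        - (I * (Real.sin (α / 2) : ℂ)) • pauli n ∧
    NormedSpace.exp ((-(I * (α / 2 : ℝ))) • pauli n) ∈
      Matrix.specialUnitaryGroup (Fin 2) ℂ := by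
  have heq := exp_smul_pauli n hn (α / 2)
  refine ⟨heq, ?_⟩
  rw [heq]
  refine su_aux n hn _ _ ?_
  norm_cast
  linarith [Real.sin_sq_add_cos_sq (α / 2)]
end

section
/- If d: ℝ → SU(2) satisfies the matrix ODE d'(t) + (i/2)(σ·B(t)) d(t) = 0 with d(0) = I₂, and s(t) := φ(d(t)) s₀ for a fixed s₀ ∈ ℝ³, then s satisfies the spin precession equation s'(t) = B(t) × s(t), where φ: SU(2) → SO(3) is the covering map. -/
open Matrix Complex

lemma pauli_comm (a b : Fin 3 → ℝ) :
    (I / 2) • (pauli b * pauli a - pauli a * pauli b) = pauli (crossProduct a b) := by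
  rw [pauli_eq a, pauli_eq b, pauli_eq]
  ext i j
  fin_cases i <;> fin_cases j <;>
    simp [Matrix.mul_apply, Fin.sum_univ_two, cross_apply, Complex.ext_iff]
  all_goals constructor <;> ring

lemma pauli_re01 (v : Fin 3 → ℝ) : (pauli v 0 1).re = v 0 := by
  rw [pauli_eq]; simp

lemma pauli_im01 (v : Fin 3 → ℝ) : -(pauli v 0 1).im = v 1 := by
  rw [pauli_eq]; simp

lemma pauli_re00 (v : Fin 3 → ℝ) : (pauli v 0 0).re = v 2 := by
  rw [pauli_eq]; simp

/-- If `d : ℝ → SU(2)` solves `d' + (i/2)(σ·B(t)) d = 0`, `d(0) = I₂`, and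
`s(t) := φ(d(t)) s₀` where `φ : SU(2) → SO(3)` is the covering map (characterized by
`d (z·σ) d⁻¹ = (φ(d)z)·σ`), then `s` satisfies the spin precession equation
`s' = B × s`. -/
theorem spin_transport_precession
    (B : ℝ → Fin 3 → ℝ) (hB : Continuous fun t => B t)
    (d : ℝ → Matrix (Fin 2) (Fin 2) ℂ)
    (hd : ∀ t, d t ∈ Matrix.specialUnitaryGroup (Fin 2) ℂ)
    (hd0 : d 0 = 1)
    (hode : ∀ t a b, HasDerivAt (fun τ => d τ a b)
      ((-((I / 2) • (pauli (B t) * d t))) a b) t)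
    (R : ℝ → Matrix (Fin 3) (Fin 3) ℝ)
    (hR : ∀ t z, d t * pauli z * (d t)⁻¹ = pauli (R t *ᵥ z))
    (s₀ : Fin 3 → ℝ) (s : ℝ → Fin 3 → ℝ) (hs : ∀ t, s t = R t *ᵥ s₀) :
    ∀ t i, HasDerivAt (fun τ => s τ i) (crossProduct (B t) (s t) i) t := by
  intro t i
  have hdinv : ∀ τ, (d τ)⁻¹ = star (d τ) := fun τ =>
    Matrix.inv_eq_right_inv ((Matrix.mem_unitaryGroup_iff).mp (hd τ).1)
  set P := pauli s₀ with hP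
  have hM : ∀ τ, d τ * P * star (d τ) = pauli (s τ) := by
    intro τ
    rw [← hdinv, hP, hR, ← hs]
  set Dm := -((I / 2) • (pauli (B t) * d t)) with hDm
  have hstarD : star Dm = (I / 2) • (star (d t) * pauli (B t)) := by
    rw [hDm, star_neg, star_smul, StarMul.star_mul, pauli_star]
    simp [Complex.star_def, div_eq_mul_inv, Matrix.mul_smul, Matrix.smul_mul, neg_smul]
  -- derivative of each entry of pauli (s τ)
  have key : ∀ a b, HasDerivAt (fun τ => pauli (s τ) a b)
      (pauli (crossProduct (B t) (s t)) a b) t := by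
    intro a b
    have hfun : (fun τ => pauli (s τ) a b) =
        (fun τ => ∑ e, (∑ c, d τ a c * P c e) * star (d τ b e)) := by
      funext τ
      rw [← hM τ]
      simp [Matrix.mul_apply, Matrix.star_apply]
    have hder : HasDerivAt
        (fun τ => ∑ e, (∑ c, d τ a c * P c e) * star (d τ b e))
        (∑ e, ((∑ c, Dm a c * P c e) * star (d t b e)
          + (∑ c, d t a c * P c e) * star (Dm b e))) t := by
      refine HasDerivAt.fun_sum fun e _ => ?_
      exact (HasDerivAt.fun_sum fun c _ => (hode t a c).mul_const (P c e)).mul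
        ((hode t b e).star)
    have hval : (∑ e, ((∑ c, Dm a c * P c e) * star (d t b e)
          + (∑ c, d t a c * P c e) * star (Dm b e)))
        = (Dm * P * star (d t) + d t * P * star Dm) a b := by
      simp [Matrix.add_apply, Matrix.mul_apply, Matrix.star_apply,
        Finset.sum_add_distrib]
    have hmat : Dm * P * star (d t) + d t * P * star Dm
        = pauli (crossProduct (B t) (s t)) := by
      rw [hstarD, ← pauli_comm (B t) (s t), ← hM t, hDm]
      simp only [Matrix.smul_mul, Matrix.mul_smul, Matrix.neg_mul, smul_sub,
        Matrix.mul_assoc, neg_smul]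
      abel
    rw [hfun]
    rw [hval, hmat] at hder
    exact hder
  -- extract components
  fin_cases i
  · have h := Complex.reCLM.hasFDerivAt.comp_hasDerivAt t (key 0 1)
    have h2 : HasDerivAt (fun τ => (pauli (s τ) 0 1).re)
        ((pauli (crossProduct (B t) (s t)) 0 1).re) t := h
    simpa [pauli_re01] using h2
  · have h := Complex.imCLM.hasFDerivAt.comp_hasDerivAt t (key 0 1)
    have h2 : HasDerivAt (fun τ => (pauli (s τ) 0 1).im)
        ((pauli (crossProduct (B t) (s t)) 0 1).im) t := h
    have h3 : HasDerivAt (fun τ => -(pauli (s τ) 0 1).im)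
        (-(pauli (crossProduct (B t) (s t)) 0 1).im) t := h2.neg
    simpa [pauli_im01] using h3
  · have h := Complex.reCLM.hasFDerivAt.comp_hasDerivAt t (key 0 0)
    have h2 : HasDerivAt (fun τ => (pauli (s τ) 0 0).re)
        ((pauli (crossProduct (B t) (s t)) 0 0).re) t := h
    simpa [pauli_re00] using h2
end

section
/- For commuting flows: suppose d_j and d_k are SU(2)-valued cocycles over commuting flows φ_jᵗ, φ_kᵗ generated by observables A_j, A_k, with generators (i/2)σ·B_j, (i/2)σ·B_k. If the mixed second derivative at (t,t')=(0,0) of Δ(t,t') := d_j(φ_kᵗ x, t') d_k(x,t) − d_k(φ_j^{t'} x, t) d_j(x,t') is computed, it equals (i/2) σ·[{B_j, A_k} + {A_j, B_k} − B_j × B_k](x), where {·,·} denotes the Poisson bracket applied componentwise. -/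
open Matrix Complex

lemma pauli_entry_hasDerivAt {B : ℝ → Fin 3 → ℝ} {B' : Fin 3 → ℝ} {t : ℝ}
    (h : ∀ i, HasDerivAt (fun s => B s i) (B' i) t) (a b : Fin 2) :
    HasDerivAt (fun s => pauli (B s) a b) (pauli B' a b) t := by
  simp only [pauli, Matrix.add_apply, Matrix.smul_apply, smul_eq_mul]
  exact (((h 0).ofReal_comp.mul_const _).add ((h 1).ofReal_comp.mul_const _)).add
    ((h 2).ofReal_comp.mul_const _)

lemma swap_mixed {g : ℝ × ℝ → ℂ} (hg : ContDiff ℝ (⊤ : ℕ∞) g) {P : ℝ → ℂ} {P' : ℂ}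
    (hP : ∀ s, HasDerivAt (fun t => g (s, t)) (P s) 0)
    (hP' : HasDerivAt P P' 0) :
    HasDerivAt (fun t => fderiv ℝ g (0, t) ((1:ℝ), (0:ℝ))) P' 0 := by
  have hdiff : Differentiable ℝ g := hg.differentiable (by simp)
  have hdg : ContDiff ℝ (⊤ : ℕ∞) (fderiv ℝ g) := hg.fderiv_right (by simp)
  have hdgd : Differentiable ℝ (fderiv ℝ g) := hdg.differentiable (by simp)
  set f'' := fderiv ℝ (fderiv ℝ g) ((0:ℝ), (0:ℝ)) with hf''def
  have hsymm : ∀ v w, f'' v w = f'' w v :=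
    second_derivative_symmetric (fun y => (hdiff y).hasFDerivAt) ((hdgd ((0:ℝ),(0:ℝ))).hasFDerivAt)
  have h1 : HasDerivAt (fun t : ℝ => fderiv ℝ g (0, t)) (f'' ((0:ℝ),(1:ℝ))) 0 := by
    have hc : HasDerivAt (fun t : ℝ => ((0:ℝ), t)) ((0:ℝ),(1:ℝ)) 0 :=
      (hasDerivAt_const (0:ℝ) (0:ℝ)).prodMk (hasDerivAt_id (0:ℝ))
    have := ((hdgd ((0:ℝ),(0:ℝ))).hasFDerivAt).comp_hasDerivAt_of_eq 0 hc rfl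
    simpa [Function.comp_def] using this
  have h2 : HasDerivAt (fun t => fderiv ℝ g (0, t) ((1:ℝ),(0:ℝ))) (f'' ((0:ℝ),(1:ℝ)) ((1:ℝ),(0:ℝ))) 0 := by
    have := h1.clm_apply (hasDerivAt_const 0 ((1:ℝ),(0:ℝ)))
    simpa using this
  have h3 : (fun s : ℝ => fderiv ℝ g (s, 0) ((0:ℝ),(1:ℝ))) = P := by
    funext s
    have hc : HasDerivAt (fun t : ℝ => (s, t)) ((0:ℝ),(1:ℝ)) 0 :=
      (hasDerivAt_const (0:ℝ) s).prodMk (hasDerivAt_id (0:ℝ))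
    have h4 : HasDerivAt (fun t => g (s, t)) (fderiv ℝ g (s, 0) ((0:ℝ),(1:ℝ))) 0 := by
      have := ((hdiff ((s:ℝ),(0:ℝ))).hasFDerivAt).comp_hasDerivAt_of_eq 0 hc rfl
      simpa [Function.comp_def] using this
    exact h4.unique (hP s)
  have h5 : HasDerivAt (fun s : ℝ => fderiv ℝ g (s, 0) ((0:ℝ),(1:ℝ))) (f'' ((1:ℝ),(0:ℝ)) ((0:ℝ),(1:ℝ))) 0 := by
    have hc : HasDerivAt (fun s : ℝ => (s, (0:ℝ))) ((1:ℝ),(0:ℝ)) 0 :=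
      (hasDerivAt_id (0:ℝ)).prodMk (hasDerivAt_const (0:ℝ) (0:ℝ))
    have h1' : HasDerivAt (fun s : ℝ => fderiv ℝ g (s, 0)) (f'' ((1:ℝ),(0:ℝ))) 0 := by
      have := ((hdgd ((0:ℝ),(0:ℝ))).hasFDerivAt).comp_hasDerivAt_of_eq 0 hc rfl
      simpa [Function.comp_def] using this
    have := h1'.clm_apply (hasDerivAt_const 0 ((0:ℝ),(1:ℝ)))
    simpa using this
  have h6 : P' = f'' ((1:ℝ),(0:ℝ)) ((0:ℝ),(1:ℝ)) := hP'.unique (h3 ▸ h5)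
  have h7 : f'' ((0:ℝ),(1:ℝ)) ((1:ℝ),(0:ℝ)) = P' := by rw [h6]; exact hsymm _ _
  exact h7 ▸ h2

set_option maxHeartbeats 2000000 in
lemma final_alg (P Q u v : Fin 3 → ℝ) (a b : Fin 2) :
    (∑ c, (-(I/2) * pauli P a c * (1 : Matrix (Fin 2) (Fin 2) ℂ) c b
        + -(I/2) * pauli u a c * (-(I/2) * pauli v c b)))
      - (∑ c, (-(I/2) * pauli Q a c * (1 : Matrix (Fin 2) (Fin 2) ℂ) c b
        + -(I/2) * pauli v a c * (-(I/2) * pauli u c b)))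
    = ((I/2) • pauli (fun i => -P i + Q i
        - ![u 1 * v 2 - u 2 * v 1, u 2 * v 0 - u 0 * v 2, u 0 * v 1 - u 1 * v 0] i)) a b := by
  fin_cases a <;> fin_cases b <;>
    simp [pauli, Fin.sum_univ_two, Matrix.one_apply, Matrix.smul_apply, smul_eq_mul] <;>
    ring_nf <;>
    simp [Complex.ext_iff, Complex.I_sq, show (I:ℂ)^3 = -I from by rw [pow_succ, Complex.I_sq]; ring] <;>
    ring_nf

/-- Suppose `d_j`, `d_k` are `SU(2)`-valued cocycles over commuting Hamiltonian flows
`φ_jᵗ`, `φ_kᵗ` (generated by observables `A_j`, `A_k`), solving the spin transport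
equations with generators `−(i/2)σ·B_j(φ_jᵗ x)`, `−(i/2)σ·B_k(φ_kᵗ x)`.  Let
`pbkj = {A_k, B_j}(x)` and `pbjk = {A_j, B_k}(x)` denote the componentwise Poisson
brackets, realised as the time derivatives of `B_j ∘ φ_k` and `B_k ∘ φ_j` at `0`.
Then the mixed second derivative at `(0,0)` of
`Δ(t,t') := d_j(φ_kᵗ x, t') d_k(x,t) − d_k(φ_j^{t'} x, t) d_j(x,t')` equals
`(i/2) σ·[{B_j,A_k} + {A_j,B_k} − B_j×B_k](x)` (note `{B_j,A_k} = −{A_k,B_j}`). -/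
theorem mixed_derivative_of_Delta {n : ℕ}
    (φj φk : ℝ → ((Fin n → ℝ) × (Fin n → ℝ)) → ((Fin n → ℝ) × (Fin n → ℝ)))
    (hφj0 : ∀ y, φj 0 y = y) (hφk0 : ∀ y, φk 0 y = y)
    (Bj Bk : ((Fin n → ℝ) × (Fin n → ℝ)) → Fin 3 → ℝ)
    (dj dk : ((Fin n → ℝ) × (Fin n → ℝ)) → ℝ → Matrix (Fin 2) (Fin 2) ℂ)
    (hdj0 : ∀ y, dj y 0 = 1) (hdk0 : ∀ y, dk y 0 = 1)
    (hdj : ∀ y t a b, HasDerivAt (fun τ => dj y τ a b)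
      ((-((I / 2) • (pauli (Bj (φj t y)) * dj y t))) a b) t)
    (hdk : ∀ y t a b, HasDerivAt (fun τ => dk y τ a b)
      ((-((I / 2) • (pauli (Bk (φk t y)) * dk y t))) a b) t)
    (x : (Fin n → ℝ) × (Fin n → ℝ))
    (pbkj pbjk : Fin 3 → ℝ)
    (hpbkj : ∀ i, HasDerivAt (fun t => Bj (φk t x) i) (pbkj i) 0)
    (hpbjk : ∀ i, HasDerivAt (fun t => Bk (φj t x) i) (pbjk i) 0)
    (hsmoothj : ∀ a b, ContDiff ℝ (⊤ : ℕ∞) (fun q : ℝ × ℝ => dj (φk q.1 x) q.2 a b))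
    (hsmoothk : ∀ a b, ContDiff ℝ (⊤ : ℕ∞) (fun q : ℝ × ℝ => dk (φj q.1 x) q.2 a b))
    (a b : Fin 2) :
    deriv (fun t => deriv (fun t' =>
        (dj (φk t x) t' * dk x t - dk (φj t' x) t * dj x t') a b) 0) 0
      = ((I / 2) • pauli (fun i =>
          (-pbkj i) + pbjk i - crossProduct (Bj x) (Bk x) i)) a b := by
  -- simplified transport derivatives at time 0
  have hdj0' : ∀ y c d, HasDerivAt (fun t' => dj y t' c d) (-(I/2) * pauli (Bj y) c d) 0 := by
    intro y c d
    have := hdj y 0 c d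
    simpa [hφj0, hdj0, Matrix.neg_apply, Matrix.smul_apply, smul_eq_mul, neg_mul] using this
  have hdk0' : ∀ y c d, HasDerivAt (fun t => dk y t c d) (-(I/2) * pauli (Bk y) c d) 0 := by
    intro y c d
    have := hdk y 0 c d
    simpa [hφk0, hdk0, Matrix.neg_apply, Matrix.smul_apply, smul_eq_mul, neg_mul] using this
  -- the t'-derivative of t' ↦ dk (φj t' x) t, as an fderiv
  have hu : ∀ (c : Fin 2) (t : ℝ), HasDerivAt (fun t' => dk (φj t' x) t a c)
      (fderiv ℝ (fun q : ℝ × ℝ => dk (φj q.1 x) q.2 a c) (0, t) ((1:ℝ), (0:ℝ))) 0 := by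
    intro c t
    have hc : HasDerivAt (fun t' : ℝ => (t', t)) ((1:ℝ),(0:ℝ)) 0 :=
      (hasDerivAt_id (0:ℝ)).prodMk (hasDerivAt_const (0:ℝ) t)
    have := (((hsmoothk a c).differentiable (by simp) ((0:ℝ), t)).hasFDerivAt).comp_hasDerivAt_of_eq 0 hc rfl
    simpa [Function.comp_def] using this
  -- closed form of the inner derivative
  have hE : ∀ t, HasDerivAt (fun t' =>
      (dj (φk t x) t' * dk x t - dk (φj t' x) t * dj x t') a b)
      ((∑ c, (-(I/2) * pauli (Bj (φk t x)) a c) * dk x t c b)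
        - (∑ c, (fderiv ℝ (fun q : ℝ × ℝ => dk (φj q.1 x) q.2 a c) (0, t) ((1:ℝ),(0:ℝ))
              * (1 : Matrix (Fin 2) (Fin 2) ℂ) c b
            + dk x t a c * (-(I/2) * pauli (Bj x) c b)))) 0 := by
    intro t
    have h1 : HasDerivAt (fun t' => ∑ c, dj (φk t x) t' a c * dk x t c b)
        (∑ c, (-(I/2) * pauli (Bj (φk t x)) a c) * dk x t c b) 0 :=
      HasDerivAt.fun_sum fun c _ => (hdj0' (φk t x) a c).mul_const _
    have h2 : HasDerivAt (fun t' => ∑ c, dk (φj t' x) t a c * dj x t' c b)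
        (∑ c, (fderiv ℝ (fun q : ℝ × ℝ => dk (φj q.1 x) q.2 a c) (0, t) ((1:ℝ),(0:ℝ))
              * (1 : Matrix (Fin 2) (Fin 2) ℂ) c b
            + dk x t a c * (-(I/2) * pauli (Bj x) c b))) 0 := by
      refine HasDerivAt.fun_sum fun c _ => ?_
      have := (hu c t).fun_mul (hdj0' x c b)
      simpa [hφj0, hdj0] using this
    have := h1.fun_sub h2
    simpa [Matrix.sub_apply, Matrix.mul_apply] using this
  -- the outer derivative
  have hD : HasDerivAt (fun t =>
      (∑ c, (-(I/2) * pauli (Bj (φk t x)) a c) * dk x t c b)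
        - (∑ c, (fderiv ℝ (fun q : ℝ × ℝ => dk (φj q.1 x) q.2 a c) (0, t) ((1:ℝ),(0:ℝ))
              * (1 : Matrix (Fin 2) (Fin 2) ℂ) c b
            + dk x t a c * (-(I/2) * pauli (Bj x) c b))))
      ((∑ c, ((-(I/2) * pauli pbkj a c) * dk x 0 c b
            + (-(I/2) * pauli (Bj (φk 0 x)) a c) * (-(I/2) * pauli (Bk x) c b)))
        - (∑ c, ((-(I/2) * pauli pbjk a c) * (1 : Matrix (Fin 2) (Fin 2) ℂ) c b
            + (-(I/2) * pauli (Bk x) a c) * (-(I/2) * pauli (Bj x) c b)))) 0 := by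
    refine HasDerivAt.fun_sub (HasDerivAt.fun_sum fun c _ => ?_) (HasDerivAt.fun_sum fun c _ => ?_)
    · exact (((pauli_entry_hasDerivAt hpbkj a c).const_mul (-(I/2))).mul (hdk0' x c b))
    · refine HasDerivAt.add ?_ ((hdk0' x a c).mul_const _)
      refine HasDerivAt.mul_const ?_ _
      refine swap_mixed (hsmoothk a c)
        (P := fun s => -(I/2) * pauli (Bk (φj s x)) a c) (fun s => ?_)
        ((pauli_entry_hasDerivAt hpbjk a c).const_mul (-(I/2)))
      have := hdk (φj s x) 0 a c
      simpa [hφk0, hdk0, Matrix.neg_apply, Matrix.smul_apply, smul_eq_mul, neg_mul] using this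
  have hfun : (fun t => deriv (fun t' =>
      (dj (φk t x) t' * dk x t - dk (φj t' x) t * dj x t') a b) 0)
      = fun t => (∑ c, (-(I/2) * pauli (Bj (φk t x)) a c) * dk x t c b)
        - (∑ c, (fderiv ℝ (fun q : ℝ × ℝ => dk (φj q.1 x) q.2 a c) (0, t) ((1:ℝ),(0:ℝ))
              * (1 : Matrix (Fin 2) (Fin 2) ℂ) c b
            + dk x t a c * (-(I/2) * pauli (Bj x) c b))) := funext fun t => (hE t).deriv
  rw [hfun, hD.deriv]
  -- final algebraic identity
  have h1 : dk x 0 = 1 := hdk0 x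
  have h2 : φk 0 x = x := hφk0 x
  rw [h1, h2]
  have hcross : (fun i => -pbkj i + pbjk i - crossProduct (Bj x) (Bk x) i)
      = fun i => -pbkj i + pbjk i - ![Bj x 1 * Bk x 2 - Bj x 2 * Bk x 1,
          Bj x 2 * Bk x 0 - Bj x 0 * Bk x 2, Bj x 0 * Bk x 1 - Bj x 1 * Bk x 0] i := by
    funext i; rw [cross_apply]
  rw [hcross]
  exact final_alg pbkj pbjk (Bj x) (Bk x) a b
end
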